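/- arXiv:2512.09906 — 4 statements merged into one kernel-verified Lean document; each statement's English description precedes it below -/
import Mathlib

section
/- Let A be a commutative ring without zero divisors that is an algebra over the rationals, and let ∂ be a locally nilpotent derivation on A (i.e., for every a ∈ A there exists n ≥ 0 with ∂^n(a) = 0). If a, b ∈ A satisfy ab ∈ Ker(∂) and ab ≠ 0, then a ∈ Ker(∂) or b ∈ Ker(∂). -/
open Finset in
lemma iter_leibniz {A : Type*} [CommRing A] [Algebra ℚ A]
    (D : Derivation ℚ A A) (k : ℕ) (a b : A) :
    (⇑D)^[k] (a * b)
      = ∑ i ∈ range (k + 1), (k.choose i) • ((⇑D)^[i] a * (⇑D)^[k - i] b) := by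
  induction k generalizing a b with
  | zero => simp
  | succ k ih =>
    have hadd : ∀ x y : A, (⇑D)^[k] (x + y) = (⇑D)^[k] x + (⇑D)^[k] y := by
      intro x y
      simp only [← Derivation.coeFn_coe, ← Module.End.pow_apply, map_add]
    rw [Function.iterate_succ_apply, Derivation.leibniz, smul_eq_mul, smul_eq_mul, hadd,
      ih a (D b), mul_comm b (D a), ih (D a) b]
    have h1 : ∀ i ∈ range (k + 1),
        (k.choose i) • ((⇑D)^[i] a * (⇑D)^[k - i] (D b))
          = (k.choose i) • ((⇑D)^[i] a * (⇑D)^[k + 1 - i] b) := by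
      intro i hi
      rw [mem_range] at hi
      rw [← Function.iterate_succ_apply, Nat.sub_add_comm (Nat.lt_succ_iff.mp hi)]
    have h2 : ∀ i ∈ range (k + 1),
        (k.choose i) • ((⇑D)^[i] (D a) * (⇑D)^[k - i] b)
          = (k.choose i) • ((⇑D)^[i + 1] a * (⇑D)^[k - i] b) := by
      intro i _
      rw [← Function.iterate_succ_apply]
    rw [Finset.sum_congr rfl h1, Finset.sum_congr rfl h2]
    -- now prove the binomial recombination
    rw [Finset.sum_range_succ' (f := fun i =>
      ((k+1).choose i) • ((⇑D)^[i] a * (⇑D)^[k + 1 - i] b))]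
    simp only [Nat.choose_succ_succ, add_smul, Finset.sum_add_distrib]
    have h3 : ∀ i ∈ range (k + 1),
        (k.choose (i + 1)) • ((⇑D)^[i + 1] a * (⇑D)^[k + 1 - (i + 1)] b)
          = (k.choose (i + 1)) • ((⇑D)^[i + 1] a * (⇑D)^[k - i] b) := by
      intro i _; rw [Nat.succ_sub_succ]
    rw [Finset.sum_congr rfl h3]
    have h4 : ∑ i ∈ range (k + 1), (k.choose i) • ((⇑D)^[i] a * (⇑D)^[k + 1 - i] b)
        = ∑ i ∈ range (k + 1), (k.choose (i+1)) • ((⇑D)^[i+1] a * (⇑D)^[k - i] b)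
          + (k.choose 0) • ((⇑D)^[0] a * (⇑D)^[k + 1] b) := by
      have h5 := Finset.sum_range_succ' (fun i =>
        (k.choose i) • ((⇑D)^[i] a * (⇑D)^[k + 1 - i] b)) (k + 1)
      rw [Finset.sum_range_succ, Nat.choose_succ_self, zero_smul, add_zero] at h5
      rw [h5, Nat.sub_zero]
      congr 1
      exact Finset.sum_congr rfl fun i hi => by rw [Nat.succ_sub_succ]
    rw [h4]
    simp [Nat.choose_zero_right]
    ring

theorem stmt0 {A : Type*} [CommRing A] [IsDomain A] [Algebra ℚ A]
    (D : Derivation ℚ A A) (hln : ∀ x : A, ∃ n : ℕ, (⇑D)^[n] x = 0)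
    (a b : A) (hab : D (a * b) = 0) (hne : a * b ≠ 0) :
    D a = 0 ∨ D b = 0 := by
  classical
  haveI : CharZero A := algebraRat.charZero A
  have ha0 : a ≠ 0 := left_ne_zero_of_mul hne
  have hb0 : b ≠ 0 := right_ne_zero_of_mul hne
  have hiter0 : ∀ k : ℕ, (⇑D)^[k] (0 : A) = 0 := fun k => by
    simp only [← Derivation.coeFn_coe, ← Module.End.pow_apply, map_zero]
  have hmono : ∀ (x : A) (m i : ℕ), (⇑D)^[m] x = 0 → m ≤ i → (⇑D)^[i] x = 0 := by
    intro x m i hm hle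
    obtain ⟨j, rfl⟩ := Nat.exists_eq_add_of_le hle
    rw [Nat.add_comm, Function.iterate_add_apply, hm, hiter0]
  have hma := Nat.find_spec (hln a)
  have hnb := Nat.find_spec (hln b)
  have hm0 : Nat.find (hln a) ≠ 0 := fun h => ha0 (by simpa [h] using hma)
  have hn0 : Nat.find (hln b) ≠ 0 := fun h => hb0 (by simpa [h] using hnb)
  obtain ⟨p, hp⟩ := Nat.exists_eq_succ_of_ne_zero hm0
  obtain ⟨q, hq⟩ := Nat.exists_eq_succ_of_ne_zero hn0
  have hpa : (⇑D)^[p] a ≠ 0 := Nat.find_min (hln a) (by omega)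
  have hqb : (⇑D)^[q] b ≠ 0 := Nat.find_min (hln b) (by omega)
  have hma' : (⇑D)^[p + 1] a = 0 := by rw [hp] at hma; exact hma
  have hnb' : (⇑D)^[q + 1] b = 0 := by rw [hq] at hnb; exact hnb
  have hsum : ∑ i ∈ Finset.range (p + q + 1),
      ((p + q).choose i) • ((⇑D)^[i] a * (⇑D)^[p + q - i] b)
        = ((p + q).choose p) • ((⇑D)^[p] a * (⇑D)^[q] b) := by
    rw [Finset.sum_eq_single p]
    · rw [Nat.add_sub_cancel_left]
    · intro i hi hne'
      rw [Finset.mem_range] at hi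
      rcases lt_or_gt_of_ne hne' with h | h
      · have hz : (⇑D)^[p + q - i] b = 0 := hmono b (q + 1) _ hnb' (by omega)
        rw [hz, mul_zero, smul_zero]
      · have hz : (⇑D)^[i] a = 0 := hmono a (p + 1) i hma' (by omega)
        rw [hz, zero_mul, smul_zero]
    · intro h
      exact absurd (Finset.mem_range.mpr (by omega)) h
  by_cases hpq : p + q = 0
  · left
    have hp0 : p = 0 := by omega
    have := hma'
    rw [hp0] at this
    simpa using this
  · exfalso
    obtain ⟨r, hr⟩ := Nat.exists_eq_succ_of_ne_zero hpq
    have hzero : (⇑D)^[p + q] (a * b) = 0 := by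
      rw [hr, Function.iterate_succ_apply, hab, hiter0]
    rw [iter_leibniz, hsum, nsmul_eq_mul] at hzero
    have hC : (((p + q).choose p : ℕ) : A) ≠ 0 :=
      Nat.cast_ne_zero.mpr (Nat.choose_pos (by omega)).ne'
    exact mul_ne_zero hC (mul_ne_zero hpa hqb) hzero
end

section
/- Let A be an integral domain containing ℚ and ∂ a derivation on A. Let a, b ∈ A be nonzero, and let n, m ∈ ℕ be minimal with ∂^{n+1}(a) = 0 and ∂^{m+1}(b) = 0. Then ∂^{n+m}(ab) = C(n+m, n) · ∂^n(a) · ∂^m(b), and in particular ∂^{n+m}(ab) ≠ 0. -/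
/-!
By the general Leibniz rule, `D^[n+m] (a * b)` is a sum over `i + j = n + m` of
`C(n+m, i) • D^[i] a * D^[j] b`. Every term with `(i, j) ≠ (n, m)` has `n < i` or `m < j`
and so vanishes, leaving `C(n+m, n) • D^[n] a * D^[m] b`. Over a domain containing `ℚ` the
binomial coefficient is a nonzero scalar, so this product is nonzero.
-/

open Finset

namespace Derivation

variable {R A : Type*} [CommSemiring R] [CommSemiring A] [Algebra R A] (D : Derivation R A A)

theorem iterate_mul (n : ℕ) (a b : A) :
    (⇑D)^[n] (a * b) =
      ∑ ij ∈ antidiagonal n, n.choose ij.1 • ((⇑D)^[ij.1] a * (⇑D)^[ij.2] b) := by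
  induction n with
  | zero => simp
  | succ n ih =>
    rw [sum_antidiagonal_choose_succ_nsmul (M := A) (fun i j => (⇑D)^[i] a * (⇑D)^[j] b) n]
    have leibniz (x y : A) : D (x * y) = D x * y + x * D y := by
      rw [D.leibniz, smul_eq_mul, smul_eq_mul, add_comm, mul_comm y]
    simp only [Function.iterate_succ_apply', ih, map_sum, map_nsmul, leibniz, smul_add,
      sum_add_distrib]
    rw [add_comm]
    congr 1
    refine sum_congr rfl fun ⟨i, j⟩ hij ↦ ?_
    rw [n.choose_symm_of_eq_add (mem_antidiagonal.1 hij).symm]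

theorem iterate_eq_zero_of_le {a : A} {k i : ℕ} (hk : (⇑D)^[k] a = 0) (hki : k ≤ i) :
    (⇑D)^[i] a = 0 := by
  obtain ⟨l, rfl⟩ := Nat.exists_eq_add_of_le hki
  rw [add_comm, Function.iterate_add_apply, hk]
  exact Function.iterate_fixed D.map_zero l

theorem iterate_mul_of_iterate_succ_eq_zero {a b : A} {n m : ℕ}
    (ha : (⇑D)^[n + 1] a = 0) (hb : (⇑D)^[m + 1] b = 0) :
    (⇑D)^[n + m] (a * b) = (n + m).choose n • ((⇑D)^[n] a * (⇑D)^[m] b) := by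
  rw [iterate_mul, sum_eq_single (n, m)]
  · rintro ⟨i, j⟩ hij hne
    obtain hi | hj : n < i ∨ m < j := by
      have hsum : i + j = n + m := mem_antidiagonal.1 hij
      by_contra! h
      exact hne (Prod.ext (by omega) (by omega))
    · rw [D.iterate_eq_zero_of_le ha hi, zero_mul, smul_zero]
    · rw [D.iterate_eq_zero_of_le hb hj, mul_zero, smul_zero]
  · exact fun h ↦ absurd (mem_antidiagonal.2 (rfl : n + m = n + m)) h

end Derivation

theorem stmt2_general {A : Type*} [CommRing A] [IsDomain A] [Algebra ℚ A]
    (D : Derivation ℚ A A) (a b : A) (n m : ℕ)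
    (han : (⇑D)^[n + 1] a = 0) (han' : (⇑D)^[n] a ≠ 0)
    (hbm : (⇑D)^[m + 1] b = 0) (hbm' : (⇑D)^[m] b ≠ 0) :
    (⇑D)^[n + m] (a * b) = (n + m).choose n • ((⇑D)^[n] a * (⇑D)^[m] b) ∧
      (⇑D)^[n + m] (a * b) ≠ 0 := by
  have : CharZero A := algebraRat.charZero A
  have hprod := D.iterate_mul_of_iterate_succ_eq_zero han hbm
  refine ⟨hprod, hprod ▸ smul_ne_zero ?_ (mul_ne_zero han' hbm')⟩
  exact (Nat.choose_pos (Nat.le_add_right n m)).ne'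

theorem stmt2 {A : Type*} [CommRing A] [IsDomain A] [Algebra ℚ A]
    (D : Derivation ℚ A A) (a b : A) (ha : a ≠ 0) (hb : b ≠ 0) (n m : ℕ)
    (han : (⇑D)^[n + 1] a = 0) (han' : (⇑D)^[n] a ≠ 0)
    (hbm : (⇑D)^[m + 1] b = 0) (hbm' : (⇑D)^[m] b ≠ 0) :
    (⇑D)^[n + m] (a * b) = (n + m).choose n • ((⇑D)^[n] a * (⇑D)^[m] b) ∧
      (⇑D)^[n + m] (a * b) ≠ 0 :=
  stmt2_general D a b n m han han' hbm hbm'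
end

section
/- Let A be an integral domain finitely generated over a field K of characteristic zero, f ∈ A nonzero, and ∂ a locally nilpotent derivation of the localization A_f. Then there exists N ∈ ℕ such that the derivation f^N ∂ maps A into A and restricts to a locally nilpotent derivation of A. -/
/-!
Since `∂` is locally nilpotent and `A_f` is a domain of characteristic zero, `∂` kills every
unit `u`, in particular `f`: the largest nonvanishing iterates of `u` and `u⁻¹` multiply, by the
Leibniz rule, to a nonzero iterate of `u u⁻¹ = 1`, which forces both degrees to be `0`. As `A` is
generated by finitely many elements, each with `f^n ∂ x ∈ A` for some `n`, one exponent `N` works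
for all generators, and the elements `a` with `f^N ∂ a ∈ A` form a subalgebra. Finally `∂ f = 0`
gives `(f^N ∂)^k = f^{Nk} ∂^k`, so local nilpotency passes to the restriction.
-/

open Finset

namespace Derivation

section Iterate

variable {K B : Type*} [CommRing K] [CommRing B] [Algebra K B] (D : Derivation K B B)

theorem iterate_map_mul (n : ℕ) (x y : B) :
    D^[n] (x * y) = ∑ ij ∈ antidiagonal n, n.choose ij.1 • (D^[ij.1] x * D^[ij.2] y) := by
  induction n with
  | zero => simp
  | succ n ih =>
    rw [sum_antidiagonal_choose_succ_nsmul (fun i j => D^[i] x * D^[j] y) n]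
    simp only [Function.iterate_succ_apply', ih, map_sum, map_nsmul, leibniz, smul_eq_mul,
      nsmul_add, sum_add_distrib]
    congr 1
    · refine sum_congr rfl fun ⟨i, j⟩ hij => ?_
      rw [Nat.choose_symm_of_eq_add (HasAntidiagonal.mem_antidiagonal.1 hij).symm]
      ring

theorem iterate_eq_zero_of_le_s11 {x : B} {m n : ℕ} (hx : D^[m] x = 0) (hmn : m ≤ n) :
    D^[n] x = 0 := by
  obtain ⟨k, rfl⟩ := Nat.exists_eq_add_of_le hmn
  rw [add_comm, Function.iterate_add_apply, hx, iterate_map_zero]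

theorem iterate_map_mul_of_iterate_succ_eq_zero {x y : B} {i j : ℕ}
    (hx : D^[i + 1] x = 0) (hy : D^[j + 1] y = 0) :
    D^[i + j] (x * y) = (i + j).choose i • (D^[i] x * D^[j] y) := by
  rw [iterate_map_mul]
  refine sum_eq_single_of_mem (i, j) (mem_antidiagonal.2 rfl) fun ⟨k, l⟩ hkl hne => ?_
  rw [HasAntidiagonal.mem_antidiagonal] at hkl
  dsimp only
  rcases Nat.lt_or_ge i k with hik | hki
  · rw [D.iterate_eq_zero_of_le_s11 hx hik, zero_mul, smul_zero]
  · have hjl : j + 1 ≤ l := by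
      by_contra h
      exact hne (Prod.ext (show k = i by omega) (show l = j by omega))
    rw [D.iterate_eq_zero_of_le_s11 hy hjl, mul_zero, smul_zero]

theorem exists_iterate_ne_zero_and_iterate_succ_eq_zero {x : B} (hx : x ≠ 0) {n : ℕ}
    (hn : D^[n] x = 0) : ∃ i, D^[i] x ≠ 0 ∧ D^[i + 1] x = 0 := by
  induction n with
  | zero => exact absurd hn hx
  | succ n ih =>
    by_cases h : D^[n] x = 0
    · exact ih h
    · exact ⟨n, h, hn⟩

theorem iterate_smul_apply_of_map_eq_zero {c : B} (hc : D c = 0) (k : ℕ) (x : B) :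
    (c • D)^[k] x = c ^ k * D^[k] x := by
  induction k with
  | zero => simp
  | succ k ih =>
    have hck : D (c ^ k) = 0 := by rw [leibniz_pow, hc, smul_zero, smul_zero]
    rw [Function.iterate_succ_apply', ih, smul_apply, leibniz, hck, smul_zero, add_zero,
      Function.iterate_succ_apply', smul_eq_mul, smul_eq_mul, pow_succ]
    ring

theorem map_eq_zero_of_isUnit [IsDomain B] [CharZero B] (hD : ∀ x, ∃ n, D^[n] x = 0)
    {u : B} (hu : IsUnit u) : D u = 0 := by
  obtain ⟨v, huv⟩ := hu.exists_right_inv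
  have hu0 : u ≠ 0 := hu.ne_zero
  have hv0 : v ≠ 0 := right_ne_zero_of_mul_eq_one huv
  obtain ⟨i, hui, hui'⟩ := D.exists_iterate_ne_zero_and_iterate_succ_eq_zero hu0 (hD u).choose_spec
  obtain ⟨j, hvj, hvj'⟩ := D.exists_iterate_ne_zero_and_iterate_succ_eq_zero hv0 (hD v).choose_spec
  have hne : D^[i + j] (u * v) ≠ 0 := by
    rw [D.iterate_map_mul_of_iterate_succ_eq_zero hui' hvj', nsmul_eq_mul]
    exact mul_ne_zero (Nat.cast_ne_zero.2 (Nat.choose_pos (Nat.le_add_right i j)).ne')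
      (mul_ne_zero hui hvj)
  have hij : i + j = 0 := by
    by_contra h
    rw [huv] at hne
    exact hne (D.iterate_eq_zero_of_le_s11 (m := 1) (by simp) (Nat.one_le_iff_ne_zero.2 h))
  simpa [Nat.eq_zero_of_add_eq_zero_right hij] using hui'

end Iterate

section Restrict

variable {K A B : Type*} [CommRing K] [CommRing A] [CommRing B] [Algebra K A] [Algebra K B]
  [Algebra A B] [IsScalarTower K A B] (D : Derivation K B B)

def preimageSubalgebra : Subalgebra K A where
  carrier := {a | D (algebraMap A B a) ∈ Set.range (algebraMap A B)}
  mul_mem' := by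
    rintro a b ⟨a', ha'⟩ ⟨b', hb'⟩
    exact ⟨a * b' + b * a', by simp [leibniz, ha', hb']⟩
  add_mem' := by
    rintro a b ⟨a', ha'⟩ ⟨b', hb'⟩
    exact ⟨a' + b', by simp [ha', hb']⟩
  algebraMap_mem' r := ⟨0, by simp [← IsScalarTower.algebraMap_apply]⟩

theorem mem_preimageSubalgebra_smul_of_mem {a : A} (b : A) {c : B}
    (ha : a ∈ (c • D).preimageSubalgebra) :
    a ∈ ((algebraMap A B b * c) • D).preimageSubalgebra := by
  obtain ⟨a', ha'⟩ := ha
  refine ⟨b * a', ?_⟩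
  rw [smul_apply, smul_eq_mul] at ha'
  rw [smul_apply, smul_eq_mul, map_mul, ha', mul_assoc]

theorem exists_restrict_of_injective (hinj : Function.Injective (algebraMap A B))
    (hD : ∀ a : A, D (algebraMap A B a) ∈ Set.range (algebraMap A B)) :
    ∃ D' : Derivation K A A, ∀ a, algebraMap A B (D' a) = D (algebraMap A B a) := by
  choose g hg using hD
  let L : A →ₗ[K] A :=
    { toFun := g
      map_add' a b := hinj (by simp [hg])
      map_smul' r a := hinj (by simp [hg, Algebra.smul_def, ← IsScalarTower.algebraMap_apply]) }
  exact ⟨mk' L fun a b => hinj (by simp [L, hg, leibniz]), hg⟩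

end Restrict

end Derivation

theorem IsLocalization.Away.exists_pow_smul_derivation_map_mem_range {K A B : Type*}
    [CommRing K] [CommRing A] [CommRing B] [Algebra K A] [Algebra K B] [Algebra A B]
    [IsScalarTower K A B] [Algebra.FiniteType K A] (f : A) [IsLocalization.Away f B]
    (D : Derivation K B B) :
    ∃ N : ℕ, ∀ a : A,
      (algebraMap A B f ^ N • D) (algebraMap A B a) ∈ Set.range (algebraMap A B) := by
  obtain ⟨s, hs⟩ := Algebra.FiniteType.out (R := K) (A := A)
  choose n a' ha' using fun a : A => IsLocalization.Away.surj f (D (algebraMap A B a))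
  have hmem : ∀ a, a ∈ (algebraMap A B f ^ n a • D).preimageSubalgebra := fun a =>
    ⟨a' a, by rw [Derivation.smul_apply, smul_eq_mul, mul_comm, ha']⟩
  refine ⟨s.sup n, fun a => ?_⟩
  suffices h : Algebra.adjoin K (s : Set A) ≤
      (algebraMap A B f ^ s.sup n • D).preimageSubalgebra by
    exact h (hs ▸ Algebra.mem_top)
  refine Algebra.adjoin_le fun x hx => ?_
  have hpow : algebraMap A B f ^ s.sup n =
      algebraMap A B (f ^ (s.sup n - n x)) * algebraMap A B f ^ n x := by
    rw [map_pow, ← pow_add, Nat.sub_add_cancel (Finset.le_sup hx)]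
  rw [SetLike.mem_coe, hpow]
  exact Derivation.mem_preimageSubalgebra_smul_of_mem _ _ (hmem x)

/-- If `A` is a finitely generated integral domain over `K`, `f ≠ 0`, and `D` is a
locally nilpotent derivation of the localization `A_f`, then for some `N` the
derivation `f^N • D` maps `A` into `A` and restricts to a locally nilpotent
derivation of `A`. -/
theorem stmt11 {K A B : Type*} [Field K] [CharZero K] [CommRing A] [IsDomain A]
    [CommRing B] [Algebra K A] [Algebra K B] [Algebra A B] [IsScalarTower K A B]
    [Algebra.FiniteType K A]
    (f : A) (hf : f ≠ 0) (hloc : IsLocalization.Away f B)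
    (D : Derivation K B B) (hln : ∀ x : B, ∃ n : ℕ, (⇑D)^[n] x = 0) :
    ∃ (N : ℕ) (D' : Derivation K A A),
      (∀ a : A, algebraMap A B (D' a) = algebraMap A B f ^ N * D (algebraMap A B a)) ∧
        (∀ a : A, ∃ k : ℕ, (⇑D')^[k] a = 0) := by
  have hf' : Submonoid.powers f ≤ nonZeroDivisors A :=
    powers_le_nonZeroDivisors_of_noZeroDivisors hf
  have hinj : Function.Injective (algebraMap A B) := IsLocalization.injective B hf'
  have : IsDomain B := IsLocalization.isDomain_of_le_nonZeroDivisors B hf'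
  have : CharZero B := charZero_of_injective_algebraMap (algebraMap K B).injective
  have hDf : D (algebraMap A B f) = 0 :=
    D.map_eq_zero_of_isUnit hln (IsLocalization.Away.algebraMap_isUnit f)
  obtain ⟨N, hN⟩ := IsLocalization.Away.exists_pow_smul_derivation_map_mem_range f D
  obtain ⟨D', hD'⟩ := (algebraMap A B f ^ N • D).exists_restrict_of_injective hinj hN
  have hiter (k : ℕ) (a : A) :
      algebraMap A B (D'^[k] a) = algebraMap A B f ^ (N * k) * D^[k] (algebraMap A B a) := by
    rw [(Function.Semiconj.iterate_right (f := algebraMap A B) hD' k).eq,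
      D.iterate_smul_apply_of_map_eq_zero (by rw [D.leibniz_pow, hDf, smul_zero, smul_zero]),
      pow_mul]
  refine ⟨N, D', hD', fun a => ?_⟩
  obtain ⟨k, hk⟩ := hln (algebraMap A B a)
  exact ⟨k, hinj (by rw [hiter, hk, mul_zero, map_zero])⟩
end

section
/- Let A be a commutative ℚ-algebra, ∂ a locally nilpotent derivation, and suppose b ∈ A satisfies ∂(b) = 1. Then A is generated over the kernel Ker(∂) by b; more precisely, every a ∈ A can be written as a = Σ_{i=0}^{n} c_i b^i with c_i ∈ Ker(∂), where n is such that ∂^{n+1}(a) = 0 (the slice theorem: A = Ker(∂)[b]). -/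
/-- Slice theorem: if `b` is a slice for a locally nilpotent derivation `D`
(`D b = 1`), then every element of `A` is a polynomial in `b` with coefficients
in `Ker D`; i.e. `A = (Ker D)[b]`. -/
theorem stmt18 {A : Type*} [CommRing A] [Algebra ℚ A]
    (D : Derivation ℚ A A) (hln : ∀ x : A, ∃ n : ℕ, (⇑D)^[n] x = 0)
    (b : A) (hb : D b = 1) :
    ∀ (a : A) (n : ℕ), (⇑D)^[n + 1] a = 0 →
      ∃ c : Fin (n + 1) → A, (∀ i, D (c i) = 0) ∧
        a = ∑ i : Fin (n + 1), c i * b ^ (i : ℕ) := by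
  intro a n
  induction n generalizing a with
  | zero =>
    intro h
    refine ⟨fun _ => a, fun i => by simpa using h, by simp⟩
  | succ n ih =>
    intro h
    have h' : (⇑D)^[n + 1] (D a) = 0 := by
      rw [← Function.iterate_succ_apply]
      exact h
    obtain ⟨d, hd, hda⟩ := ih (D a) h'
    set s : A := ∑ i : Fin (n + 1), (((i : ℕ) : ℚ) + 1)⁻¹ • d i * b ^ ((i : ℕ) + 1) with hs
    have hDs : D s = D a := by
      rw [hs, map_sum, hda]
      refine Finset.sum_congr rfl fun i _ => ?_
      rw [Derivation.leibniz, Derivation.leibniz_pow, hb, D.map_smul, hd, smul_zero,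
        smul_zero, add_zero, Nat.succ_sub_one, smul_eq_mul, smul_eq_mul, mul_one,
        ← Nat.cast_smul_eq_nsmul ℚ, smul_mul_smul_comm]
      push_cast
      rw [inv_mul_cancel₀ (by positivity : (((i : ℕ) : ℚ) + 1) ≠ 0), one_smul]
    refine ⟨Fin.cases (a - s) (fun i => (((i : ℕ) : ℚ) + 1)⁻¹ • d i), ?_, ?_⟩
    · intro j
      refine Fin.cases ?_ (fun i => ?_) j
      · simp [map_sub, hDs]
      · simp [map_smul, hd]
    · rw [Fin.sum_univ_succ]
      simp only [Fin.cases_zero, Fin.cases_succ, Fin.val_zero, pow_zero, mul_one,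
        Fin.val_succ]
      rw [← hs]
      ring
end
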